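/- Let q ∈ ℝ and k ∈ (0,2π) with k ≠ π, let Δ be the discrete Laplacian on ℓ²(ℤ) and W̃ the multiplication operator by W̃(n) := q sin(kn). Then for every E ∈ [0,4] with E ≠ 2−2cos(k/2) and E ≠ 2+2cos(k/2), there exists ε > 0 such that for every continuous function θ : ℝ → ℂ vanishing outside (E−ε, E+ε), one has θ(Δ)·W̃·θ(Δ) = 0, where θ(Δ) is defined by the continuous functional calculus of the bounded self-adjoint operator Δ. -/

import Mathlib

/-!
Let `S` be the shift `(S u) n = u (n + 1)` and `M` multiplication by `e^{ikn}`, both unitary.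
Then `Δ = 2 - S - S*` is `F(S)` for `F z = 2 - 2 Re z`, `W̃ = (-iq/2) (M - M*)`, and
`M S M* = e^{-ik} S`, so conjugation by `M` turns `θ(Δ) = h(S)`, `h = θ ∘ F`, into `h(e^{-ik} S)`.
Hence `θ(Δ) M θ(Δ) = (h · h(e^{-ik} ·))(S) M` and `θ(Δ) M* θ(Δ) = M* (h(e^{-ik} ·) · h)(S)`.
Away from the thresholds, `F z = E = F (e^{-ik} z)` has no solution on the unit circle (it forces
`cos (arg z) = ± cos (k/2)`), so by compactness there is an `ε` for which `h z · h (e^{-ik} z)`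
vanishes on the circle, which contains the spectrum of `S`.
-/

noncomputable section

open scoped ENNReal

/-- The Hilbert space ℓ²(ℤ). -/
abbrev l2Z : Type := lp (fun _ : ℤ => ℂ) 2

open Complex

theorem Memℓp.comp_equiv {ι E : Type*} [NormedAddCommGroup E] {p : ℝ≥0∞} {f : ι → E}
    (hf : Memℓp f p) (σ : ι ≃ ι) : Memℓp (f ∘ σ) p := by
  rcases p.trichotomy with rfl | rfl | hp
  · exact memℓp_zero (hf.finite_dsupport.preimage σ.injective.injOn)
  · exact memℓp_infty (hf.bddAbove.mono (Set.range_comp_subset_range σ (‖f ·‖)))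
  · exact (memℓp_gen_iff hp).2 (σ.summable_iff.2 ((memℓp_gen_iff hp).1 hf))

namespace lp

variable {ι 𝕜 E : Type*} [NormedField 𝕜] [NormedAddCommGroup E] [NormedSpace 𝕜 E]
  {p : ℝ≥0∞} [Fact (1 ≤ p)]

variable (𝕜 E p) in
def compEquiv (σ : ι ≃ ι) : lp (fun _ : ι => E) p ≃ₗᵢ[𝕜] lp (fun _ : ι => E) p where
  toFun u := ⟨u ∘ σ, (lp.memℓp u).comp_equiv σ⟩
  invFun u := ⟨u ∘ σ.symm, (lp.memℓp u).comp_equiv σ.symm⟩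
  map_add' _ _ := rfl
  map_smul' _ _ := rfl
  left_inv u := by ext; simp
  right_inv u := by ext; simp
  norm_map' u := by
    rcases p.trichotomy with rfl | rfl | hp
    · exact absurd (Fact.out : (1 : ℝ≥0∞) ≤ 0) (by norm_num)
    · rw [norm_eq_ciSup, norm_eq_ciSup]
      exact σ.iSup_comp (g := fun i => ‖u i‖)
    · rw [norm_eq_tsum_rpow hp, norm_eq_tsum_rpow hp]
      exact congrArg (· ^ (1 / p.toReal)) (σ.tsum_eq (fun i => ‖u i‖ ^ p.toReal))

variable (E p) in
def smulUnimodular (c : ι → 𝕜) (hc : ∀ i, ‖c i‖ = 1) :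
    lp (fun _ : ι => E) p ≃ₗᵢ[𝕜] lp (fun _ : ι => E) p where
  toFun u := ⟨fun i => c i • u i, (lp.memℓp u).mono' fun i => by rw [norm_smul, hc, one_mul]⟩
  invFun u := ⟨fun i => (c i)⁻¹ • u i, (lp.memℓp u).mono' fun i => by
    rw [norm_smul, norm_inv, hc, inv_one, one_mul]⟩
  map_add' _ _ := by ext i; exact smul_add _ _ _
  map_smul' _ _ := by ext i; exact smul_comm _ _ _
  left_inv u := by
    ext i; exact inv_smul_smul₀ (norm_ne_zero_iff.1 <| (hc i).trans_ne one_ne_zero) _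
  right_inv u := by
    ext i; exact smul_inv_smul₀ (norm_ne_zero_iff.1 <| (hc i).trans_ne one_ne_zero) _
  norm_map' u := by
    have hp : p ≠ 0 := (zero_lt_one.trans_le Fact.out).ne'
    refine le_antisymm (norm_mono hp fun i => ?_) (norm_mono hp fun i => ?_) <;>
      simp [norm_smul, hc]

end lp

namespace Real

theorem cos_eq_or_eq_neg_cos_half_of_cos_eq_cos_sub {k ξ : ℝ} (hk0 : 0 < k) (hk2 : k < 2 * π)
    (h : cos ξ = cos (ξ - k)) : cos ξ = cos (k / 2) ∨ cos ξ = -cos (k / 2) := by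
  have hsin : sin (k / 2) ≠ 0 := (sin_pos_of_pos_of_lt_pi (by linarith) (by linarith)).ne'
  have hprod : sin ((ξ + (ξ - k)) / 2) * sin (k / 2) = 0 := by
    have := cos_sub_cos ξ (ξ - k)
    rw [show (ξ - (ξ - k)) / 2 = k / 2 by ring, h, sub_self] at this
    linarith
  obtain ⟨n, hn⟩ := sin_eq_zero_iff.1 ((mul_eq_zero.1 hprod).resolve_right hsin)
  have hξ : ξ = k / 2 + n * π := by linarith
  rw [hξ, cos_add_int_mul_pi]
  rcases Int.even_or_odd n with hev | hodd
  · left; rw [hev.neg_one_zpow, one_mul]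
  · right; rw [hodd.neg_one_zpow, neg_one_mul]

end Real

theorem Complex.re_eq_or_eq_neg_cos_half_of_re_exp_mul_eq {k : ℝ} (hk0 : 0 < k)
    (hk2 : k < 2 * Real.pi) {z : ℂ} (hz : ‖z‖ = 1) (h : (exp (-k * I) * z).re = z.re) :
    z.re = Real.cos (k / 2) ∨ z.re = -Real.cos (k / 2) := by
  have hz' : z = exp (z.arg * I) := by simpa [hz] using (norm_mul_exp_arg_mul_I z).symm
  rw [hz', ← exp_add, show -k * I + z.arg * I = ((z.arg - k : ℝ) : ℂ) * I by push_cast; ring,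
    exp_ofReal_mul_I_re, exp_ofReal_mul_I_re] at h
  rw [hz', exp_ofReal_mul_I_re]
  exact Real.cos_eq_or_eq_neg_cos_half_of_cos_eq_cos_sub hk0 hk2 h.symm

theorem IsCompact.exists_pos_le_abs_or_le_abs {X : Type*} [TopologicalSpace X] {K : Set X}
    (hK : IsCompact K) {f g : X → ℝ} (hf : ContinuousOn f K) (hg : ContinuousOn g K)
    (hfg : ∀ x ∈ K, f x ≠ 0 ∨ g x ≠ 0) : ∃ ε > 0, ∀ x ∈ K, ε ≤ |f x| ∨ ε ≤ |g x| := by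
  obtain ⟨ε, hε, hmin⟩ := hK.exists_forall_le' (f := fun x => max |f x| |g x|)
    (by fun_prop) (a := 0) fun x hx => lt_max_iff.2 ((hfg x hx).imp abs_pos.2 abs_pos.2)
  exact ⟨ε, hε, fun x hx => le_max_iff.1 (hmin x hx)⟩

theorem exists_pos_le_abs_or_le_abs_of_ne_threshold {k E : ℝ} (hk0 : 0 < k)
    (hk2 : k < 2 * Real.pi)
    (hEm : E ≠ 2 - 2 * Real.cos (k / 2)) (hEp : E ≠ 2 + 2 * Real.cos (k / 2)) :
    ∃ ε > 0, ∀ z ∈ Metric.sphere (0 : ℂ) 1,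
      ε ≤ |2 - 2 * z.re - E| ∨ ε ≤ |2 - 2 * (exp (-k * I) * z).re - E| := by
  refine (isCompact_sphere 0 1).exists_pos_le_abs_or_le_abs (by fun_prop) (by fun_prop) ?_
  intro z hz
  by_contra! h
  rcases Complex.re_eq_or_eq_neg_cos_half_of_re_exp_mul_eq hk0 hk2 (by simpa using hz)
    (by linarith [h.1, h.2]) with hre | hre
  · exact hEm (by linarith [h.1])
  · exact hEp (by linarith [h.1])

section CStarAlgebra

variable {A : Type*} [CStarAlgebra A]

theorem cfc_conj_unitary_of_conj_eq_smul (u : unitary A) {s : A} [IsStarNormal s] {c : ℂ}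
    (hus : u * s * star (u : A) = c • s) {f : ℂ → ℂ} (hf : Continuous f) :
    u * cfc f s * star (u : A) = cfc (fun z => f (c * z)) s := by
  calc (u : A) * cfc f s * star (u : A) = Unitary.conjStarAlgAut ℂ A u (cfc f s) := rfl
    _ = cfc f (Unitary.conjStarAlgAut ℂ A u s) :=
        StarAlgHomClass.map_cfc _ f s
          (hφ := show Continuous fun x => (u : A) * x * star (u : A) by fun_prop)
    _ = cfc (fun z => f (c * z)) s := by
        rw [Unitary.conjStarAlgAut_apply, hus, cfc_comp_const_mul c f s]

variable (u : unitary A) {s : A} [IsStarNormal s] {c : ℂ} (hus : u * s * star (u : A) = c • s)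
  {f : ℂ → ℂ} (hf : Continuous f) (hfc : ∀ z ∈ spectrum ℂ s, f z * f (c * z) = 0)
include hus hf hfc

theorem cfc_mul_unitary_mul_cfc_eq_zero : cfc f s * u * cfc f s = 0 := calc
  cfc f s * u * cfc f s = cfc f s * (u * cfc f s * star (u : A)) * u := by
    simp only [mul_assoc, Unitary.coe_star_mul_self, mul_one]
  _ = cfc (fun z => f z * f (c * z)) s * u := by
    rw [cfc_conj_unitary_of_conj_eq_smul u hus hf, cfc_mul f _ s]
  _ = 0 := by rw [cfc_congr hfc, cfc_const_zero, zero_mul]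

theorem cfc_mul_star_unitary_mul_cfc_eq_zero : cfc f s * star (u : A) * cfc f s = 0 := calc
  cfc f s * star (u : A) * cfc f s = star (u : A) * (u * cfc f s * star (u : A)) * cfc f s := by
    simp only [← mul_assoc, Unitary.coe_star_mul_self, one_mul]
  _ = star (u : A) * cfc (fun z => f (c * z) * f z) s := by
    rw [cfc_conj_unitary_of_conj_eq_smul u hus hf, mul_assoc, cfc_mul _ f s]
  _ = 0 := by
    rw [cfc_congr (fun z hz => (mul_comm _ _).trans (hfc z hz)), cfc_const_zero, mul_zero]

end CStarAlgebra

namespace l2Z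

open ContinuousLinearMap

def shift : unitary (l2Z →L[ℂ] l2Z) :=
  Unitary.linearIsometryEquiv.symm (lp.compEquiv ℂ ℂ 2 (Equiv.addRight 1))

def modulation (k : ℝ) : unitary (l2Z →L[ℂ] l2Z) :=
  Unitary.linearIsometryEquiv.symm
    (lp.smulUnimodular ℂ 2 (fun n : ℤ => exp ((k * n : ℝ) * I)) fun _ => norm_exp_ofReal_mul_I _)

@[simp]
theorem shift_apply (u : l2Z) (n : ℤ) : (shift : l2Z →L[ℂ] l2Z) u n = u (n + 1) := rfl

@[simp]
theorem star_shift_apply (u : l2Z) (n : ℤ) : star (shift : l2Z →L[ℂ] l2Z) u n = u (n - 1) := by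
  rw [shift, Unitary.coe_symm_linearIsometryEquiv_apply, LinearIsometryEquiv.star_eq_symm]
  rfl

@[simp]
theorem modulation_apply (k : ℝ) (u : l2Z) (n : ℤ) :
    (modulation k : l2Z →L[ℂ] l2Z) u n = exp (k * n * I) * u n := by
  push_cast [modulation]
  rfl

@[simp]
theorem star_modulation_apply (k : ℝ) (u : l2Z) (n : ℤ) :
    star (modulation k : l2Z →L[ℂ] l2Z) u n = exp (-(k * n) * I) * u n := by
  rw [modulation, Unitary.coe_symm_linearIsometryEquiv_apply, LinearIsometryEquiv.star_eq_symm,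
    neg_mul, exp_neg]
  push_cast
  rfl

theorem modulation_mul_shift_mul_star (k : ℝ) :
    modulation k * shift * star (modulation k : l2Z →L[ℂ] l2Z) =
      exp (-k * I) • (shift : l2Z →L[ℂ] l2Z) := by
  ext u n
  simp only [mul_apply_eq_comp, modulation_apply, shift_apply, star_modulation_apply, smul_apply,
    lp.coeFn_smul, Pi.smul_apply, smul_eq_mul, ← mul_assoc, ← exp_add]
  congr 2
  push_cast
  ring

theorem eq_two_sub_shift_sub_star {Δop : l2Z →L[ℂ] l2Z}
    (hΔ : ∀ (u : l2Z) (n : ℤ), (Δop u) n = 2 * u n - u (n + 1) - u (n - 1)) :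
    Δop = algebraMap ℂ _ 2 - shift - star (shift : l2Z →L[ℂ] l2Z) := by
  ext u n
  simp only [hΔ, Algebra.algebraMap_eq_smul_one, sub_apply, smul_apply, one_apply_eq_self,
    lp.coeFn_sub, lp.coeFn_smul, Pi.sub_apply, Pi.smul_apply, smul_eq_mul, shift_apply,
    star_shift_apply]

theorem eq_smul_modulation_sub_star {q k : ℝ} {Wt : l2Z →L[ℂ] l2Z}
    (hWt : ∀ (u : l2Z) (n : ℤ), (Wt u) n = ((q * Real.sin (k * n) : ℝ) : ℂ) * u n) :
    Wt = (-q * I / 2 : ℂ) • (modulation k - star (modulation k : l2Z →L[ℂ] l2Z)) := by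
  ext u n
  simp only [hWt, smul_apply, sub_apply, lp.coeFn_sub, lp.coeFn_smul, Pi.sub_apply,
    Pi.smul_apply, smul_eq_mul, modulation_apply, star_modulation_apply]
  push_cast
  rw [sin]
  ring

theorem cfc_re_eq_cfc_shift {Δop : l2Z →L[ℂ] l2Z}
    (hΔ : ∀ (u : l2Z) (n : ℤ), (Δop u) n = 2 * u n - u (n + 1) - u (n - 1))
    {θ : ℝ → ℂ} (hθ : Continuous θ) :
    cfc (fun z : ℂ => θ z.re) Δop =
      cfc (fun z : ℂ => θ (2 - 2 * z.re)) (shift : l2Z →L[ℂ] l2Z) := by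
  have hΔS : Δop = cfc (fun z : ℂ => 2 - z - star z) (shift : l2Z →L[ℂ] l2Z) := by
    rw [cfc_sub .., cfc_sub .., cfc_const .., cfc_id' .., cfc_star_id ..,
      eq_two_sub_shift_sub_star hΔ]
  rw [hΔS, ← cfc_comp' (fun z : ℂ => θ z.re) _ _ (by fun_prop)]
  refine congrArg (cfc · _) (funext fun z => congrArg θ ?_)
  simp only [sub_re, re_ofNat, star_def, conj_re]
  ring

end l2Z

theorem theta_Delta_Wtilde_theta_eq_zero_general (q k : ℝ) (hk0 : 0 < k) (hk2 : k < 2 * Real.pi)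
    (Δop Wt : l2Z →L[ℂ] l2Z)
    (hΔ : ∀ (u : l2Z) (n : ℤ), (Δop u) n = 2 * u n - u (n + 1) - u (n - 1))
    (hWt : ∀ (u : l2Z) (n : ℤ), (Wt u) n = ((q * Real.sin (k * n) : ℝ) : ℂ) * u n)
    (E : ℝ)
    (hEm : E ≠ 2 - 2 * Real.cos (k / 2)) (hEp : E ≠ 2 + 2 * Real.cos (k / 2)) :
    ∃ ε > 0, ∀ θ : ℝ → ℂ, Continuous θ →
      (∀ x : ℝ, x ∉ Set.Ioo (E - ε) (E + ε) → θ x = 0) →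
      cfc (fun z : ℂ => θ z.re) Δop * Wt * cfc (fun z : ℂ => θ z.re) Δop = 0 := by
  obtain ⟨ε, hε, hgap⟩ := exists_pos_le_abs_or_le_abs_of_ne_threshold hk0 hk2 hEm hEp
  refine ⟨ε, hε, fun θ hθ hθE => ?_⟩
  have hθ_eq_zero : ∀ x, ε ≤ |x - E| → θ x = 0 := fun x hx =>
    hθE x fun hmem => hx.not_gt (abs_sub_lt_iff.2 ⟨by linarith [hmem.2], by linarith [hmem.1]⟩)
  have hvan : ∀ z ∈ spectrum ℂ (l2Z.shift : l2Z →L[ℂ] l2Z),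
      θ (2 - 2 * z.re) * θ (2 - 2 * (exp (-k * I) * z).re) = 0 := fun z hz =>
    (hgap z (spectrum.subset_circle_of_unitary l2Z.shift.prop hz)).elim
      (fun h => mul_eq_zero_of_left (hθ_eq_zero _ h) _)
      (fun h => mul_eq_zero_of_right _ (hθ_eq_zero _ h))
  have hcont : Continuous fun z : ℂ => θ (2 - 2 * z.re) := by fun_prop
  rw [l2Z.cfc_re_eq_cfc_shift hΔ hθ, l2Z.eq_smul_modulation_sub_star hWt, mul_smul_comm,
    smul_mul_assoc, mul_sub, sub_mul,
    cfc_mul_unitary_mul_cfc_eq_zero _ (l2Z.modulation_mul_shift_mul_star k) hcont hvan,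
    cfc_mul_star_unitary_mul_cfc_eq_zero _ (l2Z.modulation_mul_shift_mul_star k) hcont hvan,
    sub_zero, smul_zero]

/-- Let Δ be the discrete Laplacian on ℓ²(ℤ) and W̃ multiplication by
q·sin(kn). For every E ∈ [0,4] with E ≠ 2∓2cos(k/2), there is ε > 0 such that for every
continuous θ : ℝ → ℂ vanishing outside (E−ε,E+ε), one has θ(Δ)·W̃·θ(Δ) = 0, where θ(Δ) is
given by the continuous functional calculus of the bounded self-adjoint operator Δ. -/
theorem theta_Delta_Wtilde_theta_eq_zero (q k : ℝ) (hk0 : 0 < k) (hk2 : k < 2 * Real.pi)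
    (hkpi : k ≠ Real.pi)
    (Δop Wt : l2Z →L[ℂ] l2Z)
    (hΔ : ∀ (u : l2Z) (n : ℤ), (Δop u) n = 2 * u n - u (n + 1) - u (n - 1))
    (hΔsa : IsSelfAdjoint Δop)
    (hWt : ∀ (u : l2Z) (n : ℤ), (Wt u) n = ((q * Real.sin (k * n) : ℝ) : ℂ) * u n)
    (E : ℝ) (hE : E ∈ Set.Icc (0 : ℝ) 4)
    (hEm : E ≠ 2 - 2 * Real.cos (k / 2)) (hEp : E ≠ 2 + 2 * Real.cos (k / 2)) :
    ∃ ε > 0, ∀ θ : ℝ → ℂ, Continuous θ →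
      (∀ x : ℝ, x ∉ Set.Ioo (E - ε) (E + ε) → θ x = 0) →
      cfc (fun z : ℂ => θ z.re) Δop * Wt * cfc (fun z : ℂ => θ z.re) Δop = 0 :=
  theta_Delta_Wtilde_theta_eq_zero_general q k hk0 hk2 Δop Wt hΔ hWt E hEm hEp
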